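/- arXiv:1912.00948 — 6 statements merged into one kernel-verified Lean document; each statement's English description precedes it below -/
import Mathlib

section
/- Let G be a graph, Q ⊆ V(G), and a, b ∈ V(G) such that min(dist(a,q), r+1) = min(dist(b,q), r+1) for every q ∈ Q. Then for every X ⊆ V(G), Q captures the pair (X, a) if and only if Q captures the pair (X, b). -/
/-- `Q` captures `X`: a walk of length at most `r` between two distinct vertices of `X`
passes through a vertex of `Q`. -/
def captures {V : Type*} (G : SimpleGraph V) (r : ℕ) (Q X : Set V) : Prop :=
  ∃ u ∈ X, ∃ v ∈ X, u ≠ v ∧ ∃ q ∈ Q, ∃ w : G.Walk u v, w.length ≤ r ∧ q ∈ w.support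

/-- `Q` captures the pair `(X, a)`: a walk of length at most `r` from some vertex of `X`
to `a` passes through a vertex of `Q`. -/
def capturesPair {V : Type*} (G : SimpleGraph V) (r : ℕ) (Q X : Set V) (a : V) : Prop :=
  ∃ x ∈ X, ∃ q ∈ Q, ∃ w : G.Walk x a, w.length ≤ r ∧ q ∈ w.support

private lemma capturesPair_mono_of_profile {V : Type*} (G : SimpleGraph V) (r : ℕ) (Q : Set V)
    (a b : V)
    (hprof : ∀ q ∈ Q, min (G.edist a q) ((r + 1 : ℕ) : ℕ∞) = min (G.edist b q) ((r + 1 : ℕ) : ℕ∞))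
    (X : Set V) (h : capturesPair G r Q X a) : capturesPair G r Q X b := by
  classical
  obtain ⟨x, hx, q, hq, w, hlen, hsup⟩ := h
  have hsplit : (w.takeUntil q hsup).length + (w.dropUntil q hsup).length = w.length := by
    rw [← SimpleGraph.Walk.length_append, SimpleGraph.Walk.take_spec]
  have hdaq : G.edist a q ≤ ((w.dropUntil q hsup).length : ℕ∞) := by
    have h1 := SimpleGraph.edist_le (w.dropUntil q hsup).reverse
    rwa [SimpleGraph.Walk.length_reverse] at h1
  have hw2r : ((w.dropUntil q hsup).length : ℕ∞) ≤ (r : ℕ∞) := by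
    have : (w.dropUntil q hsup).length ≤ r := by omega
    exact_mod_cast this
  have hlt : G.edist a q < ((r + 1 : ℕ) : ℕ∞) := by
    refine lt_of_le_of_lt (hdaq.trans hw2r) ?_
    exact_mod_cast Nat.lt_succ_self r
  have hbq : G.edist b q ≤ ((w.dropUntil q hsup).length : ℕ∞) := by
    have h2 := hprof q hq
    rw [min_eq_left hlt.le] at h2
    rcases min_le_iff.mp h2.ge with h3 | h3
    · exact h3.trans hdaq
    · exfalso
      have h4 : ((r + 1 : ℕ) : ℕ∞) ≤ (r : ℕ∞) := h3.trans (hdaq.trans hw2r)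
      have : r + 1 ≤ r := by exact_mod_cast h4
      omega
  have hne : G.edist q b ≠ ⊤ := by
    rw [SimpleGraph.edist_comm]
    exact (hbq.trans_lt (ENat.coe_lt_top _)).ne
  obtain ⟨p, hp⟩ := SimpleGraph.exists_walk_of_edist_ne_top hne
  refine ⟨x, hx, q, hq, (w.takeUntil q hsup).append p, ?_, ?_⟩
  · rw [SimpleGraph.Walk.length_append]
    have hpl : (p.length : ℕ∞) ≤ ((w.dropUntil q hsup).length : ℕ∞) := by
      rw [hp, SimpleGraph.edist_comm]; exact hbq
    have : p.length ≤ (w.dropUntil q hsup).length := by exact_mod_cast hpl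
    omega
  · rw [SimpleGraph.Walk.mem_support_append_iff]
    right; exact SimpleGraph.Walk.start_mem_support p

/-- Whether `Q` captures `(X, a)` depends only on the profile of `a` on `Q`. -/
theorem capturesPair_of_profile_eq {V : Type*} (G : SimpleGraph V) (r : ℕ) (Q : Set V)
    (a b : V)
    (hprof : ∀ q ∈ Q, min (G.edist a q) ((r + 1 : ℕ) : ℕ∞) = min (G.edist b q) ((r + 1 : ℕ) : ℕ∞)) :
    ∀ X : Set V, (capturesPair G r Q X a ↔ capturesPair G r Q X b) := by
  intro X
  constructor
  · exact capturesPair_mono_of_profile G r Q a b hprof X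
  · exact capturesPair_mono_of_profile G r Q b a (fun q hq => (hprof q hq).symm) X
end

section
/- Let G be a graph, r, k ∈ ℕ with k ≥ 1, and let Q ⊆ V(G) be a (k−1, r)-cowitness for the pair (V(G), G). If G has no r-independent set of size k, then Q is a (k, r)-witness: every set X ⊆ V(G) with |X| = k is captured by Q. -/
/-- Cowitness is a witness (whenever possible). -/
theorem cowitness_is_witness {V : Type*} [Fintype V] [DecidableEq V]
    (G : SimpleGraph V) (r k : ℕ) (hk : 1 ≤ k) (Q : Set V)
    (hco : ∀ Y : Finset V, Y.card = k - 1 →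
      (∀ v : V, ∃ y ∈ Y, G.edist v y ≤ (r : ℕ∞)) →
      ∀ a : V, capturesPair G r Q (↑Y) a)
    (hnoind : ¬ ∃ I : Finset V, I.card = k ∧
      ∀ u ∈ I, ∀ v ∈ I, u ≠ v → (r : ℕ∞) < G.edist u v) :
    ∀ X : Finset V, X.card = k → captures G r Q (↑X) := by
  classical
  -- `Z X` is the set of vertices of `X` at distance `> r` from all other vertices of `X`.
  set Z : Finset V → Finset V := fun X =>
    X.filter (fun x => ∀ y ∈ X, y ≠ x → (r : ℕ∞) < G.edist x y) with hZ
  suffices H : ∀ n : ℕ, ∀ X : Finset V, X.card = k → k - (Z X).card ≤ n →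
      captures G r Q (↑X) by
    intro X hX
    exact H k X hX (Nat.sub_le _ _)
  intro n
  induction n with
  | zero =>
    intro X hX h0
    exfalso
    apply hnoind
    refine ⟨X, hX, ?_⟩
    have hsub : Z X ⊆ X := Finset.filter_subset _ _
    have hcard : X.card ≤ (Z X).card := by omega
    have hXZ : Z X = X := Finset.eq_of_subset_of_card_le hsub hcard
    intro u hu v hv huv
    have hu' : u ∈ Z X := hXZ.symm ▸ hu
    rw [hZ, Finset.mem_filter] at hu'
    exact hu'.2 v hv (Ne.symm huv)
  | succ n ih =>
    intro X hX hn
    -- X is not r-independent: get a close pair u ≠ v.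
    have hpair : ∃ u ∈ X, ∃ v ∈ X, u ≠ v ∧ G.edist u v ≤ (r : ℕ∞) := by
      by_contra hc
      push_neg at hc
      exact hnoind ⟨X, hX, fun u hu v hv huv => hc u hu v hv huv⟩
    obtain ⟨u, hu, v, hv, huv, hclose⟩ := hpair
    set Y := X.erase v with hY
    have hYcard : Y.card = k - 1 := by rw [hY, Finset.card_erase_of_mem hv, hX]
    have huY : u ∈ Y := Finset.mem_erase.mpr ⟨huv, hu⟩
    by_cases hdom : ∀ w : V, ∃ y ∈ Y, G.edist w y ≤ (r : ℕ∞)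
    · -- Y dominates: apply the cowitness with a = v.
      obtain ⟨x, hx, q, hq, w, hw, hqw⟩ := hco Y hYcard hdom v
      have hxY : x ∈ Y := hx
      have hxv : x ≠ v := (Finset.mem_erase.mp hxY).1
      exact ⟨x, Finset.mem_coe.mpr (Finset.mem_of_mem_erase hxY), v, Finset.mem_coe.mpr hv,
        hxv, q, hq, w, hw, hqw⟩
    · -- Y does not dominate: get z far from Y, replace v by z.
      push_neg at hdom
      obtain ⟨z, hz⟩ := hdom
      have hzfar : ∀ y ∈ Y, (r : ℕ∞) < G.edist z y := hz
      have hzY : z ∉ Y := fun h => absurd (hzfar z h) (by simp [SimpleGraph.edist_self])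
      have hzv : z ≠ v := by
        intro h
        have := hzfar u huY
        rw [h] at this
        exact absurd hclose (not_le.mpr (by rwa [SimpleGraph.edist_comm] at this))
      have hzX : z ∉ X := fun h => hzY (Finset.mem_erase.mpr ⟨hzv, h⟩)
      set X' := insert z Y with hX'
      have hX'card : X'.card = k := by
        rw [hX', Finset.card_insert_of_notMem hzY, hYcard]
        omega
      -- the measure decreases: Z X ∪ {z} ⊆ Z X'.
      have hvZ : v ∉ Z X := by
        intro h
        rw [hZ, Finset.mem_filter] at h
        exact absurd hclose (not_le.mpr (by
          have := h.2 u hu huv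
          rwa [SimpleGraph.edist_comm] at this))
      have hsub1 : Z X ⊆ Z X' := by
        intro w hw
        rw [hZ, Finset.mem_filter] at hw ⊢
        obtain ⟨hwX, hwfar⟩ := hw
        have hwv : w ≠ v := fun h => hvZ (h ▸ (by rw [hZ, Finset.mem_filter]; exact ⟨hwX, hwfar⟩))
        have hwY : w ∈ Y := Finset.mem_erase.mpr ⟨hwv, hwX⟩
        refine ⟨Finset.mem_insert_of_mem hwY, fun y hy hyw => ?_⟩
        rcases Finset.mem_insert.mp hy with h | h
        · subst h
          rw [SimpleGraph.edist_comm]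
          exact hzfar w hwY
        · exact hwfar y (Finset.mem_of_mem_erase h) hyw
      have hzZ' : z ∈ Z X' := by
        rw [hZ, Finset.mem_filter]
        refine ⟨Finset.mem_insert_self _ _, fun y hy hyz => ?_⟩
        rcases Finset.mem_insert.mp hy with h | h
        · exact absurd h hyz
        · exact hzfar y h
      have hznZ : z ∉ Z X := fun h => hzX (Finset.filter_subset _ _ h)
      have hcard' : (Z X).card + 1 ≤ (Z X').card := by
        have : insert z (Z X) ⊆ Z X' := by
          intro w hw
          rcases Finset.mem_insert.mp hw with h | h
          · exact h ▸ hzZ'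
          · exact hsub1 h
        calc (Z X).card + 1 = (insert z (Z X)).card := (Finset.card_insert_of_notMem hznZ).symm
          _ ≤ (Z X').card := Finset.card_le_card this
      have hmeas : k - (Z X').card ≤ n := by omega
      -- capture X' and transfer back to X.
      obtain ⟨u', hu', v', hv', hne, q, hq, w, hw, hqw⟩ := ih X' hX'card hmeas
      have hdist : G.edist u' v' ≤ (r : ℕ∞) :=
        le_trans w.edist_le (by exact_mod_cast Nat.cast_le.mpr hw)
      have hu'Y : u' ∈ Y := by
        rcases Finset.mem_insert.mp (Finset.mem_coe.mp hu') with h | h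
        · exfalso
          rcases Finset.mem_insert.mp (Finset.mem_coe.mp hv') with h' | h'
          · exact hne (h.trans h'.symm)
          · exact absurd hdist (not_le.mpr (h ▸ hzfar v' h'))
        · exact h
      have hv'Y : v' ∈ Y := by
        rcases Finset.mem_insert.mp (Finset.mem_coe.mp hv') with h | h
        · exfalso
          exact absurd hdist (not_le.mpr (by
            rw [SimpleGraph.edist_comm]
            exact h ▸ hzfar u' hu'Y))
        · exact h
      exact ⟨u', Finset.mem_coe.mpr (Finset.mem_of_mem_erase hu'Y), v',
        Finset.mem_coe.mpr (Finset.mem_of_mem_erase hv'Y), hne, q, hq, w, hw, hqw⟩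
end

section
/- Let G be a finite graph with no r-independent set of size k (k ≥ 1), and let X ⊆ V(G) with |X| = k be a set not captured by Q, where Q is some fixed vertex subset. Then there exist distinct vertices w, v ∈ X with dist(w, v) ≤ r, and either (a) every vertex of G is within distance r of X \ {w} (X r-dominates G after removing w), or (b) there exists w' ∉ N_r(X \ {w}) such that the set X' = (X \ {w}) ∪ {w'} also has size k, is not captured by Q, and has f(X') < f(X), where f(Y) = |{u ∈ Y : ∃ v ∈ Y, v ≠ u and dist(u,v) ≤ r}|. -/
open Classical in
/-- The number of non-isolated (within distance `r`) vertices of `X`. -/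
noncomputable def badCount {V : Type*} (G : SimpleGraph V) (r : ℕ) (X : Finset V) : ℕ :=
  (X.filter (fun u => ∃ v ∈ X, v ≠ u ∧ G.edist u v ≤ (r : ℕ∞))).card

open Classical in
lemma mem_badFilter {V : Type*} (G : SimpleGraph V) (r : ℕ) (X : Finset V) (u : V) :
    u ∈ X.filter (fun u => ∃ v ∈ X, v ≠ u ∧ G.edist u v ≤ (r : ℕ∞)) ↔
      u ∈ X ∧ ∃ v ∈ X, v ≠ u ∧ G.edist u v ≤ (r : ℕ∞) :=
  Finset.mem_filter

/-- Improvement step in the proof that a cowitness is a witness. -/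
theorem improvement_step {V : Type*} [Fintype V] [DecidableEq V]
    (G : SimpleGraph V) (r k : ℕ) (hk : 1 ≤ k)
    (hnoind : ¬ ∃ I : Finset V, I.card = k ∧
      ∀ u ∈ I, ∀ v ∈ I, u ≠ v → (r : ℕ∞) < G.edist u v)
    (Q : Set V) (X : Finset V) (hX : X.card = k) (hcap : ¬ captures G r Q (↑X)) :
    ∃ w ∈ X, ∃ v ∈ X, w ≠ v ∧ G.edist w v ≤ (r : ℕ∞) ∧
      ((∀ u : V, ∃ x ∈ X.erase w, G.edist u x ≤ (r : ℕ∞)) ∨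
       (∃ w' : V, (∀ x ∈ X.erase w, (r : ℕ∞) < G.edist w' x) ∧
         (insert w' (X.erase w)).card = k ∧
         ¬ captures G r Q (↑(insert w' (X.erase w))) ∧
         badCount G r (insert w' (X.erase w)) < badCount G r X)) := by
  classical
  have hnind : ¬ ∀ u ∈ X, ∀ v ∈ X, u ≠ v → (r : ℕ∞) < G.edist u v :=
    fun h => hnoind ⟨X, hX, h⟩
  push_neg at hnind
  obtain ⟨w, hw, v, hv, hwv, hle⟩ := hnind
  refine ⟨w, hw, v, hv, hwv, hle, ?_⟩
  by_cases hdom : ∀ u : V, ∃ x ∈ X.erase w, G.edist u x ≤ (r : ℕ∞)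
  · exact Or.inl hdom
  push_neg at hdom
  obtain ⟨w', hw'⟩ := hdom
  have hw'notin : w' ∉ X.erase w := by
    intro h
    have := hw' w' h
    simp [SimpleGraph.edist_self] at this
  have hcard : (insert w' (X.erase w)).card = k := by
    rw [Finset.card_insert_of_notMem hw'notin, Finset.card_erase_of_mem hw, hX]
    omega
  refine Or.inr ⟨w', hw', hcard, ?_, ?_⟩
  · rintro ⟨u, hu, v', hv', huv', q, hq, p, hlen, hsup⟩
    have hmem : ∀ {x : V}, x ∈ (↑(insert w' (X.erase w)) : Set V) →
        x = w' ∨ x ∈ X.erase w := by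
      intro x hx
      rw [Finset.mem_coe, Finset.mem_insert] at hx
      exact hx
    have hnowalk : ∀ {x : V}, x ∈ X.erase w → ¬ ((G.edist w' x) ≤ (r : ℕ∞)) := by
      intro x hx h
      exact absurd h (not_le.mpr (hw' x hx))
    rcases hmem hu with rfl | hu'
    · rcases hmem hv' with rfl | hv''
      · exact huv' rfl
      · exact hnowalk hv'' (le_trans (G.edist_le p) (by exact_mod_cast hlen))
    · rcases hmem hv' with rfl | hv''
      · refine hnowalk hu' ?_
        rw [SimpleGraph.edist_comm]
        exact le_trans (G.edist_le p) (by exact_mod_cast hlen)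
      · exact hcap ⟨u, Finset.mem_of_mem_erase hu', v', Finset.mem_of_mem_erase hv'',
          huv', q, hq, p, hlen, hsup⟩
  · have hwne : w' ≠ w := by
      intro h
      have hv' : v ∈ X.erase w := Finset.mem_erase.mpr ⟨hwv.symm, hv⟩
      exact absurd hle (not_le.mpr (h ▸ hw' v hv'))
    unfold badCount
    apply Finset.card_lt_card
    rw [Finset.ssubset_iff_of_subset]
    · refine ⟨w, (mem_badFilter G r X w).mpr ⟨hw, v, hv, hwv.symm, hle⟩, ?_⟩
      intro hmem
      have := ((mem_badFilter G r _ w).mp hmem).1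
      rcases Finset.mem_insert.mp this with h | h
      · exact hwne h.symm
      · exact (Finset.mem_erase.mp h).1 rfl
    · intro u hu
      rw [mem_badFilter] at hu ⊢
      obtain ⟨huX', v'', hv'', hne, hed⟩ := hu
      have huX : u ∈ X.erase w := by
        rcases Finset.mem_insert.mp huX' with rfl | h
        · exfalso
          rcases Finset.mem_insert.mp hv'' with rfl | h2
          · exact hne rfl
          · exact absurd hed (not_le.mpr (hw' v'' h2))
        · exact h
      have hvX : v'' ∈ X.erase w := by
        rcases Finset.mem_insert.mp hv'' with rfl | h
        · exfalso
          refine absurd ?_ (not_le.mpr (hw' u huX))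
          rw [SimpleGraph.edist_comm]; exact hed
        · exact h
      exact ⟨Finset.mem_of_mem_erase huX, v'', Finset.mem_of_mem_erase hvX, hne, hed⟩
end

section
/- If X ⊆ V(G) is not captured by Q, w ∈ X, and w' is a vertex with dist(w', x) > r for all x ∈ X \ {w}, then the set X' = (X \ {w}) ∪ {w'} is not captured by Q. -/
/-- Swapping a vertex `w` for a far-away vertex `w'` preserves being uncaptured. -/
theorem swap_not_captured {V : Type*} (G : SimpleGraph V) (r : ℕ) (Q X : Set V) (w w' : V)
    (hcap : ¬ captures G r Q X) (hw : w ∈ X)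
    (hw' : ∀ x ∈ X \ {w}, (r : ℕ∞) < G.edist w' x) :
    ¬ captures G r Q ((X \ {w}) ∪ {w'}) := by
  rintro ⟨u, hu, v, hv, huv, q, hq, p, hlen, hsup⟩
  have key : ∀ a : V, a ∈ X \ {w} → ∀ p : G.Walk w' a, p.length ≤ r → False := by
    intro a ha p hlen
    have h1 := hw' a ha
    have h2 : G.edist w' a ≤ (p.length : ℕ∞) := p.edist_le
    have h3 : (p.length : ℕ∞) ≤ (r : ℕ∞) := by exact_mod_cast hlen
    exact absurd (h2.trans h3) (not_le.mpr h1)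
  rcases hu with hu | hu <;> rcases hv with hv | hv
  · exact hcap ⟨u, hu.1, v, hv.1, huv, q, hq, p, hlen, hsup⟩
  · exact key u hu (p.reverse.copy (Set.eq_of_mem_singleton hv) rfl)
      (by simpa using hlen)
  · exact key v hv (p.copy (Set.eq_of_mem_singleton hu) rfl) (by simpa using hlen)
  · exact huv (hu.trans hv.symm)
end

section
/- Let G be the r-subdivision of the complete graph K_n with n ≥ 4. Then G has no (1, r+1+⌈r/2⌉)-cowitness for the pair (V(G), G) of size smaller than ⌊(n−1)/2⌋. -/
/-- Edges of `K_n`, as ordered pairs. -/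
abbrev EdgeKn (n : ℕ) := {p : Fin n × Fin n // p.1 < p.2}

/-- Vertices of the `r`-subdivision of `K_n`: branch vertices plus `r` internal
vertices on each edge. -/
abbrev SubVert (n r : ℕ) := Fin n ⊕ (EdgeKn n × Fin r)

/-- Adjacency of the `r`-subdivision of `K_n`: internal vertex `(e, i)` lies at
distance `i + 1` from `e.1.1` along the subdivided edge `e`. -/
def subAdj (n r : ℕ) : SubVert n r → SubVert n r → Prop
  | Sum.inl u, Sum.inl v => r = 0 ∧ u ≠ v
  | Sum.inl u, Sum.inr (e, i) => (u = e.1.1 ∧ (i : ℕ) = 0) ∨ (u = e.1.2 ∧ (i : ℕ) = r - 1)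
  | Sum.inr (e, i), Sum.inl u => (u = e.1.1 ∧ (i : ℕ) = 0) ∨ (u = e.1.2 ∧ (i : ℕ) = r - 1)
  | Sum.inr (e, i), Sum.inr (e', j) => e = e' ∧ ((i : ℕ) + 1 = j ∨ (j : ℕ) + 1 = i)

/-- The `r`-subdivision of the complete graph `K_n`. -/
def subdivK (n r : ℕ) : SimpleGraph (SubVert n r) where
  Adj := subAdj n r
  symm := by
    constructor
    rintro (u | ⟨e, i⟩) (v | ⟨e', j⟩) h <;> simp only [subAdj] at h ⊢ <;> tauto
  loopless := by
    constructor
    rintro (u | ⟨e, i⟩) h <;> simp only [subAdj] at h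
    · exact h.2 rfl
    · rcases h with ⟨-, h | h⟩ <;> omega

/-
A closed walk from a branch vertex `v` of length at most `r + 1 + ⌈r/2⌉ < 2 (r + 1)` never
gets `r + 1` away from `v`, so it stays on the subdivided edges at `v`. Every branch vertex has
eccentricity at most `r + 1 + ⌈r/2⌉`, so taking `x = a = v` shows that a cowitness meets the
star of subdivided edges at every branch vertex `v`. A vertex lies in at most two such stars,
hence `n ≤ 2 |Q|`.
-/

open SimpleGraph

theorem SimpleGraph.Walk.le_add_length_of_lipschitz {V : Type*} {G : SimpleGraph V}
    {φ : V → ℕ} (hφ : ∀ ⦃a b⦄, G.Adj a b → φ b ≤ φ a + 1) {x y : V} (w : G.Walk x y) :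
    φ y ≤ φ x + w.length := by
  induction w with
  | nil => simp
  | cons h _ ih => have := hφ h; simp only [Walk.length_cons]; omega

theorem SimpleGraph.Walk.two_mul_le_length_of_mem_support {V : Type*} {G : SimpleGraph V}
    {φ : V → ℕ} (hφ : ∀ ⦃a b⦄, G.Adj a b → φ b ≤ φ a + 1) {x q : V} (w : G.Walk x x)
    (hq : q ∈ w.support) : 2 * φ q ≤ 2 * φ x + w.length := by
  obtain ⟨w₁, w₂, rfl⟩ := Walk.mem_support_iff_exists_append.mp hq
  have h₁ := w₁.le_add_length_of_lipschitz hφ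
  have h₂ := w₂.reverse.le_add_length_of_lipschitz hφ
  rw [Walk.length_reverse] at h₂
  rw [Walk.length_append]
  omega

namespace SubdivK

variable {n r : ℕ}

/-- The `k`-th vertex, `0 ≤ k ≤ r + 1`, on the subdivided edge `e`, counted from `e.1.1`. -/
def edgePoint (e : EdgeKn n) : ℕ → SubVert n r
  | 0 => Sum.inl e.1.1
  | k + 1 => if h : k < r then Sum.inr (e, ⟨k, h⟩) else Sum.inl e.1.2

theorem edgePoint_zero (e : EdgeKn n) : (edgePoint e 0 : SubVert n r) = Sum.inl e.1.1 := rfl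

theorem edgePoint_val_add_one (e : EdgeKn n) (i : Fin r) :
    (edgePoint e (i + 1) : SubVert n r) = Sum.inr (e, i) := by
  simp [edgePoint]

theorem edgePoint_last (e : EdgeKn n) : (edgePoint e (r + 1) : SubVert n r) = Sum.inl e.1.2 := by
  simp [edgePoint]

theorem adj_edgePoint_succ (e : EdgeKn n) {k : ℕ} (hk : k ≤ r) :
    (subdivK n r).Adj (edgePoint e k) (edgePoint e (k + 1)) := by
  show subAdj n r _ _
  rcases k with _ | k <;> simp only [edgePoint] <;> split_ifs <;>
    simp_all [subAdj, e.2.ne, e.2.ne']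
  omega

theorem edist_edgePoint_le (e : EdgeKn n) {j k : ℕ} (hjk : j ≤ k) (hk : k ≤ r + 1) :
    (subdivK n r).edist (edgePoint e j) (edgePoint e k) ≤ (k - j : ℕ) := by
  induction k, hjk using Nat.le_induction with
  | base => simp
  | succ k hjk ih =>
    calc (subdivK n r).edist (edgePoint e j) (edgePoint e (k + 1))
        ≤ (subdivK n r).edist (edgePoint e j) (edgePoint e k)
          + (subdivK n r).edist (edgePoint e k) (edgePoint e (k + 1)) :=
          SimpleGraph.edist_triangle
      _ ≤ (k - j : ℕ) + 1 :=
          add_le_add (ih (by omega)) (edist_eq_one_iff_adj.mpr (adj_edgePoint_succ e (by omega))).le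
      _ = (k + 1 - j : ℕ) := by norm_cast; omega

theorem edist_inl_inl_le (a b : Fin n) :
    (subdivK n r).edist (Sum.inl a) (Sum.inl b) ≤ (r + 1 : ℕ) := by
  rcases lt_trichotomy a b with hab | rfl | hab
  · simpa [edgePoint_zero, edgePoint_last] using
      edist_edgePoint_le (r := r) ⟨(a, b), hab⟩ (Nat.zero_le _) le_rfl
  · simp
  · rw [SimpleGraph.edist_comm]
    simpa [edgePoint_zero, edgePoint_last] using
      edist_edgePoint_le (r := r) ⟨(b, a), hab⟩ (Nat.zero_le _) le_rfl

theorem edist_inl_le (v : Fin n) (u : SubVert n r) :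
    (subdivK n r).edist u (Sum.inl v) ≤ (r + 1 + (r + 1) / 2 : ℕ) := by
  rcases u with a | ⟨e, i⟩
  · exact (edist_inl_inl_le a v).trans (by norm_cast; omega)
  have hi := i.isLt
  have h₁ : (subdivK n r).edist (Sum.inr (e, i)) (Sum.inl e.1.1) ≤ (i + 1 : ℕ) := by
    rw [SimpleGraph.edist_comm, ← edgePoint_zero, ← edgePoint_val_add_one]
    simpa using edist_edgePoint_le e (k := i + 1) (Nat.zero_le _) (by omega)
  have h₂ : (subdivK n r).edist (Sum.inr (e, i)) (Sum.inl e.1.2) ≤ (r - i : ℕ) := by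
    rw [← edgePoint_last, ← edgePoint_val_add_one]
    simpa using edist_edgePoint_le e (j := i + 1) (by omega) le_rfl
  have via (b : Fin n) (d : ℕ) (hb : (subdivK n r).edist (Sum.inr (e, i)) (Sum.inl b) ≤ d)
      (hd : d ≤ (r + 1) / 2) :
      (subdivK n r).edist (Sum.inr (e, i)) (Sum.inl v) ≤ (r + 1 + (r + 1) / 2 : ℕ) :=
    calc (subdivK n r).edist (Sum.inr (e, i)) (Sum.inl v)
        ≤ (subdivK n r).edist (Sum.inr (e, i)) (Sum.inl b)
          + (subdivK n r).edist (Sum.inl b) (Sum.inl v) := SimpleGraph.edist_triangle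
      _ ≤ d + (r + 1 : ℕ) := add_le_add hb (edist_inl_inl_le _ _)
      _ ≤ (r + 1 + (r + 1) / 2 : ℕ) := by norm_cast; omega
  rcases le_or_gt ((i : ℕ) + 1) ((r + 1) / 2) with hside | hside
  · exact via e.1.1 _ h₁ hside
  · exact via e.1.2 _ h₂ (by omega)

/-- The distance from `Sum.inl v`, truncated at `r + 1`. -/
def cappedDist (v : Fin n) : SubVert n r → ℕ
  | Sum.inl u => if u = v then 0 else r + 1
  | Sum.inr (e, i) => if v = e.1.1 then i + 1 else if v = e.1.2 then r - i else r + 1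

@[simp]
theorem cappedDist_inl_self (v : Fin n) : cappedDist v (Sum.inl v : SubVert n r) = 0 := by
  simp [cappedDist]

theorem cappedDist_le_succ_of_adj (v : Fin n) ⦃a b : SubVert n r⦄ (h : (subdivK n r).Adj a b) :
    cappedDist v b ≤ cappedDist v a + 1 := by
  rcases a with u | ⟨e, i⟩ <;> rcases b with u' | ⟨e', j⟩ <;>
    simp only [subdivK, subAdj] at h <;> simp only [cappedDist] <;> split_ifs <;>
    simp only [Fin.ext_iff] at * <;> grind

def segmentEnds : SubVert n r → Finset (Fin n)
  | Sum.inl u => {u}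
  | Sum.inr (e, _) => {e.1.1, e.1.2}

theorem card_segmentEnds_le (x : SubVert n r) : (segmentEnds x).card ≤ 2 := by
  rcases x with u | ⟨e, -⟩
  · simp [segmentEnds]
  · exact Finset.card_le_two

theorem mem_segmentEnds_of_cappedDist_le {v : Fin n} {x : SubVert n r}
    (h : cappedDist v x ≤ r) : v ∈ segmentEnds x := by
  rcases x with u | ⟨e, i⟩ <;> simp only [cappedDist] at h <;> split_ifs at h <;>
    simp_all [segmentEnds]

theorem mem_segmentEnds_of_mem_support {v : Fin n} {q : SubVert n r}
    (w : (subdivK n r).Walk (Sum.inl v) (Sum.inl v)) (hw : w.length ≤ r + 1 + (r + 1) / 2)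
    (hq : q ∈ w.support) : v ∈ segmentEnds q := by
  have := w.two_mul_le_length_of_mem_support (cappedDist_le_succ_of_adj v) hq
  rw [cappedDist_inl_self] at this
  exact mem_segmentEnds_of_cappedDist_le (by omega)

end SubdivK

theorem subdivK_no_small_cowitness_general (n r : ℕ)
    (Q : Finset (SubVert n r)) (hQ : Q.card < (n - 1) / 2) :
    ¬ (∀ x : SubVert n r,
        (∀ u : SubVert n r,
          (subdivK n r).edist u x ≤ ((r + 1 + (r + 1) / 2 : ℕ) : ℕ∞)) →
        ∀ a : SubVert n r, ∃ q ∈ Q, ∃ w : (subdivK n r).Walk x a,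
          w.length ≤ r + 1 + (r + 1) / 2 ∧ q ∈ w.support) := by
  intro H
  have hcover (v : Fin n) : ∃ q ∈ Q, v ∈ SubdivK.segmentEnds q := by
    obtain ⟨q, hq, w, hw, hqw⟩ := H (Sum.inl v) (SubdivK.edist_inl_le v) (Sum.inl v)
    exact ⟨q, hq, SubdivK.mem_segmentEnds_of_mem_support w hw hqw⟩
  have hn : n ≤ Q.card * 2 :=
    calc n = (Finset.univ : Finset (Fin n)).card := by simp
      _ ≤ (Q.biUnion SubdivK.segmentEnds).card :=
        Finset.card_le_card fun v _ => Finset.mem_biUnion.mpr (hcover v)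
      _ ≤ Q.card * 2 :=
        Finset.card_biUnion_le_card_mul _ _ _ fun q _ => SubdivK.card_segmentEnds_le q
  omega

/-- The `r`-subdivision of `K_n` (with `n ≥ 4`) has no `(1, r + 1 + ⌈r/2⌉)`-cowitness
for the pair `(V(G), G)` of size smaller than `⌊(n - 1) / 2⌋`. -/
theorem subdivK_no_small_cowitness (n r : ℕ) (hn : 4 ≤ n)
    (Q : Finset (SubVert n r)) (hQ : Q.card < (n - 1) / 2) :
    ¬ (∀ x : SubVert n r,
        (∀ u : SubVert n r,
          (subdivK n r).edist u x ≤ ((r + 1 + (r + 1) / 2 : ℕ) : ℕ∞)) →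
        ∀ a : SubVert n r, ∃ q ∈ Q, ∃ w : (subdivK n r).Walk x a,
          w.length ≤ r + 1 + (r + 1) / 2 ∧ q ∈ w.support) :=
  subdivK_no_small_cowitness_general n r Q hQ
end

section
/- In the r-subdivision of K_n, for distinct branch vertices v, a, b and c an internal vertex in the middle of the subdivided edge between a and b (the one at distance ⌈(r+1)/2⌉ from a), every path of length at most r + 1 + ⌈r/2⌉ from v to c is contained in the union of the subdivided edges (v,a), (v,b), and (a,b). -/
/-- The set of vertices of the subdivided edge joining branch vertices `x` and `y`. -/
def subEdgeSet (n r : ℕ) (x y : Fin n) : Set (SubVert n r) :=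
  {z | z = Sum.inl x ∨ z = Sum.inl y ∨
    ∃ (e : EdgeKn n) (i : Fin r), z = Sum.inr (e, i) ∧
      ((e.1.1 = x ∧ e.1.2 = y) ∨ (e.1.1 = y ∧ e.1.2 = x))}


/-!
A walk that leaves an internal vertex of a subdivided edge stays on that edge until it reaches
one of its two ends. Consequently a path between distinct branch vertices that meets a third
branch vertex has length at least `2(r+1)`, so a path of length at most `2r+1` between branch
vertices runs along the subdivided edge joining them. Reversed, a path from `v` to `c` first runs
along `ab` to `a` or `b` and then, within the remaining budget of at most `2r+1`, along a single
subdivided edge to `v`.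
-/

open SimpleGraph

variable {n r : ℕ}

lemma subEdgeSet_comm (x y : Fin n) : subEdgeSet n r x y = subEdgeSet n r y x := by
  have key : ∀ x y : Fin n, subEdgeSet n r x y ⊆ subEdgeSet n r y x := by
    rintro x y z (h | h | ⟨e, i, hz, h⟩)
    exacts [.inr (.inl h), .inl h, .inr (.inr ⟨e, i, hz, h.symm⟩)]
  exact (key x y).antisymm (key y x)

lemma subEdgeSet_eq {e : EdgeKn n} {a b : Fin n}
    (he : (e.1.1 = a ∧ e.1.2 = b) ∨ (e.1.1 = b ∧ e.1.2 = a)) :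
    subEdgeSet n r e.1.1 e.1.2 = subEdgeSet n r a b := by
  rcases he with ⟨rfl, rfl⟩ | ⟨rfl, rfl⟩
  exacts [rfl, subEdgeSet_comm _ _]

lemma inl_mem_subEdgeSet_left (x y : Fin n) : (Sum.inl x : SubVert n r) ∈ subEdgeSet n r x y :=
  Or.inl rfl

lemma inl_mem_subEdgeSet_right (x y : Fin n) : (Sum.inl y : SubVert n r) ∈ subEdgeSet n r x y :=
  Or.inr (Or.inl rfl)

lemma inr_mem_subEdgeSet (e : EdgeKn n) (i : Fin r) :
    (Sum.inr (e, i) : SubVert n r) ∈ subEdgeSet n r e.1.1 e.1.2 :=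
  Or.inr (Or.inr ⟨e, i, rfl, Or.inl ⟨rfl, rfl⟩⟩)

/-- The endpoints are generalized to equations so that `induction` applies; the length bounds
say that `(e, i)` lies at distance `i + 1` from `e.1.1` and `r - i` from `e.1.2`. -/
lemma subdivK.exists_eq_append_of_walk_inr_inl (e : EdgeKn n) {s t : SubVert n r}
    (w : (subdivK n r).Walk s t) (i : Fin r) (hs : s = Sum.inr (e, i)) (u : Fin n)
    (ht : t = Sum.inl u) :
    ∃ (x : Fin n) (w₁ : (subdivK n r).Walk s (Sum.inl x)) (w₂ : (subdivK n r).Walk (Sum.inl x) t),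
      (x = e.1.1 ∨ x = e.1.2) ∧ w = w₁.append w₂ ∧
      (∀ z ∈ w₁.support, z ∈ subEdgeSet n r e.1.1 e.1.2) ∧
      (x = e.1.1 → (i : ℕ) + 1 ≤ w₁.length) ∧ (x = e.1.2 → r - (i : ℕ) ≤ w₁.length) := by
  have hne : e.1.1 ≠ e.1.2 := e.2.ne
  induction w generalizing i with
  | nil => cases hs.symm.trans ht
  | @cons s y t h p ih =>
    subst hs ht
    obtain x | ⟨e', j⟩ := y
    · have hx : (x = e.1.1 ∧ (i : ℕ) = 0) ∨ (x = e.1.2 ∧ (i : ℕ) = r - 1) := h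
      refine ⟨x, .cons h .nil, p, by tauto, rfl, ?_, ?_, ?_⟩
      · simp only [Walk.support_cons, Walk.support_nil, List.mem_cons, List.not_mem_nil,
          or_false]
        rintro z (rfl | rfl)
        · exact inr_mem_subEdgeSet e i
        · rcases hx with ⟨rfl, -⟩ | ⟨rfl, -⟩
          exacts [inl_mem_subEdgeSet_left _ _, inl_mem_subEdgeSet_right _ _]
      · rintro rfl
        have := i.pos
        simp only [Walk.length_cons, Walk.length_nil]
        rcases hx with ⟨-, hi⟩ | ⟨h₂, -⟩ <;> [omega; exact absurd h₂ hne]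
      · rintro rfl
        have := i.pos
        simp only [Walk.length_cons, Walk.length_nil]
        rcases hx with ⟨h₁, -⟩ | ⟨-, hi⟩ <;> [exact absurd h₁.symm hne; omega]
    · have hadj : e = e' ∧ ((i : ℕ) + 1 = j ∨ (j : ℕ) + 1 = i) := h
      obtain ⟨rfl, hij⟩ := hadj
      obtain ⟨x, w₁, w₂, hx, rfl, hsupp, h₁, h₂⟩ := ih j rfl rfl
      refine ⟨x, .cons h w₁, w₂, hx, rfl, ?_, ?_, ?_⟩
      · simp only [Walk.support_cons, List.mem_cons]
        rintro z (rfl | hz)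
        exacts [inr_mem_subEdgeSet e i, hsupp z hz]
      · intro hx₁
        have := h₁ hx₁
        simp only [Walk.length_cons]
        omega
      · intro hx₂
        have := h₂ hx₂
        simp only [Walk.length_cons]
        omega

theorem subdivK.lt_length_and_mem_subEdgeSet_of_isPath (hr : 1 ≤ r) {u u' : Fin n}
    (w : (subdivK n r).Walk (Sum.inl u) (Sum.inl u')) (hw : w.IsPath) (hne : u ≠ u')
    (hlen : w.length ≤ 2 * r + 1) :
    r < w.length ∧ ∀ z ∈ w.support, z ∈ subEdgeSet n r u u' := by
  match w with
  | .nil => exact absurd rfl hne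
  | .cons (v := .inl x) h _ => exact absurd (h : r = 0 ∧ u ≠ x).1 (by omega)
  | .cons (v := .inr (e, j)) h p =>
    have hu : (u = e.1.1 ∧ (j : ℕ) = 0) ∨ (u = e.1.2 ∧ (j : ℕ) = r - 1) := h
    obtain ⟨x, w₁, w₂, hx, rfl, hsupp, h₁, h₂⟩ :=
      subdivK.exists_eq_append_of_walk_inr_inl e p j rfl u' rfl
    obtain ⟨hp, hup⟩ := Walk.cons_isPath_iff _ _ |>.mp hw
    have hxu : x ≠ u := by
      rintro rfl
      exact hup (Walk.mem_support_append_iff _ _ |>.mpr (.inl w₁.end_mem_support))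
    have hw₁ : r ≤ w₁.length ∧ ((e.1.1 = u ∧ e.1.2 = x) ∨ (e.1.1 = x ∧ e.1.2 = u)) := by
      rcases hu with ⟨rfl, hj⟩ | ⟨rfl, hj⟩ <;> rcases hx with rfl | rfl
      · exact absurd rfl hxu
      · exact ⟨by have := h₂ rfl; omega, .inl ⟨rfl, rfl⟩⟩
      · exact ⟨by have := h₁ rfl; omega, .inr ⟨rfl, rfl⟩⟩
      · exact absurd rfl hxu
    have hw₂ : w₂.IsPath := hp.of_append_right
    simp only [Walk.length_cons, Walk.length_append] at hlen ⊢
    obtain rfl : x = u' := by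
      by_contra hxu'
      have := (lt_length_and_mem_subEdgeSet_of_isPath hr w₂ hw₂ hxu' (by omega)).1
      omega
    obtain rfl : w₂ = .nil := (Walk.isPath_iff_nil.mp hw₂).eq_nil
    refine ⟨by simp only [Walk.length_nil]; omega, ?_⟩
    simp only [Walk.support_cons, List.mem_cons, Walk.append_nil]
    rintro z (rfl | hz)
    · exact inl_mem_subEdgeSet_left _ _
    · exact subEdgeSet_eq hw₁.2 ▸ hsupp z hz
termination_by w.length
decreasing_by subst_vars; simp only [Walk.length_cons, Walk.length_append]; omega

theorem subdivK_path_local_general (n r : ℕ) (v a b : Fin n)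
    (hva : v ≠ a) (hvb : v ≠ b)
    (e : EdgeKn n) (he : (e.1.1 = a ∧ e.1.2 = b) ∨ (e.1.1 = b ∧ e.1.2 = a)) (i : Fin r)
    (w : (subdivK n r).Walk (Sum.inl v) (Sum.inr (e, i))) (hw : w.IsPath)
    (hlen : w.length ≤ r + 1 + (r + 1) / 2) :
    ∀ z ∈ w.support,
      z ∈ subEdgeSet n r v a ∪ subEdgeSet n r v b ∪ subEdgeSet n r a b := by
  have hr : 1 ≤ r := i.pos
  obtain ⟨x, w₁, w₂, hx, hsplit, hsupp, -, -⟩ :=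
    subdivK.exists_eq_append_of_walk_inr_inl e w.reverse i rfl v rfl
  have hxab : x = a ∨ x = b := by rcases he with ⟨rfl, rfl⟩ | ⟨rfl, rfl⟩ <;> tauto
  have hxv : x ≠ v := by rintro rfl; tauto
  have hw₂ : w₂.IsPath := (hsplit ▸ hw.reverse).of_append_right
  have hlen₂ : w₂.length ≤ 2 * r + 1 := by
    have := congrArg Walk.length hsplit
    simp only [Walk.length_reverse, Walk.length_append] at this
    omega
  have hw₂supp := (subdivK.lt_length_and_mem_subEdgeSet_of_isPath hr w₂ hw₂ hxv hlen₂).2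
  intro z hz
  rw [← List.mem_reverse, ← Walk.support_reverse, hsplit, Walk.mem_support_append_iff] at hz
  rcases hz with hz | hz
  · exact .inr (subEdgeSet_eq he ▸ hsupp z hz)
  · have := subEdgeSet_comm (r := r) x v ▸ hw₂supp z hz
    rcases hxab with rfl | rfl
    exacts [.inl (.inl this), .inl (.inr this)]

/-- Every path of length at most `r + 1 + ⌈r/2⌉` from a branch vertex `v` to the middle
vertex `c` of the subdivided edge `ab` (the internal vertex at distance `⌈(r+1)/2⌉` from `a`)
is contained in the union of the subdivided edges `(v,a)`, `(v,b)` and `(a,b)`. -/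
theorem subdivK_path_local (n r : ℕ) (hn : 3 ≤ n) (v a b : Fin n)
    (hva : v ≠ a) (hvb : v ≠ b) (hab : a ≠ b)
    (e : EdgeKn n) (he : (e.1.1 = a ∧ e.1.2 = b) ∨ (e.1.1 = b ∧ e.1.2 = a)) (i : Fin r)
    (hc : (subdivK n r).edist (Sum.inl a) (Sum.inr (e, i)) = (((r + 2) / 2 : ℕ) : ℕ∞))
    (w : (subdivK n r).Walk (Sum.inl v) (Sum.inr (e, i))) (hw : w.IsPath)
    (hlen : w.length ≤ r + 1 + (r + 1) / 2) :
    ∀ z ∈ w.support,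
      z ∈ subEdgeSet n r v a ∪ subEdgeSet n r v b ∪ subEdgeSet n r a b :=
  subdivK_path_local_general n r v a b hva hvb e he i w hw hlen
end
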